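/- arXiv:1810.13246 — 4 statements merged into one kernel-verified Lean document; each statement's English description precedes it below -/
import Mathlib

section
/- Let 𝒳 and 𝒴 be finite sets and let π be a pmf on 𝒳 × 𝒴 with marginals π_X and π_Y. Then 𝓗(π_X, π_Y ‖ π) ≥ H(π), and equality holds if and only if π(x,y) = π_X(x)·π_Y(y) for all (x,y) ∈ 𝒳 × 𝒴. -/
/-!
Taking `Q = π` shows `𝓗(π_X, π_Y ‖ π) ≥ H(π)`. Taking `Q = π_X ⊗ π_Y`, Gibbs' inequality gives
`𝓗(π_X, π_Y ‖ π) ≥ H(π_X ⊗ π_Y) = H(π_X) + H(π_Y)`, and this exceeds `H(π)` unless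
`π = π_X ⊗ π_Y`, again by Gibbs' inequality (positivity of mutual information). Conversely, if
`π = π_X ⊗ π_Y` then `log (1/π)` splits as `log (1/π_X) + log (1/π_Y)` on the support of every
coupling, so all couplings have cross-entropy `H(π_X) + H(π_Y) = H(π)`.
-/

open scoped BigOperators

/-- `log(1/t)` with values in the extended reals: `+∞` when `t = 0`. -/
noncomputable def negLogE (t : ℝ) : EReal :=
  if t = 0 then (⊤ : EReal) else ((Real.log t⁻¹ : ℝ) : EReal)

/-- `Q` is a coupling of the pmfs `PX` and `PY`. -/
def IsCoupling {X Y : Type*} [Fintype X] [Fintype Y]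
    (PX : X → ℝ) (PY : Y → ℝ) (Q : X × Y → ℝ) : Prop :=
  (∀ p, 0 ≤ Q p) ∧ (∀ x, ∑ y, Q (x, y) = PX x) ∧ (∀ y, ∑ x, Q (x, y) = PY y)

/-- The maximal cross-entropy `𝓗(PX, PY ‖ π)`, with values in the extended reals. -/
noncomputable def maxCrossEnt {X Y : Type*} [Fintype X] [Fintype Y]
    (PX : X → ℝ) (PY : Y → ℝ) (π : X × Y → ℝ) : EReal :=
  sSup {s : EReal | ∃ Q, IsCoupling PX PY Q ∧
    s = ∑ p : X × Y, (Q p : EReal) * negLogE (π p)}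

/-- Shannon entropy `H(P) = ∑ P(x) log(1/P(x))` (with `0 · log (1/0) = 0`). -/
noncomputable def entropy {X : Type*} [Fintype X] (P : X → ℝ) : ℝ :=
  ∑ x, P x * Real.log (P x)⁻¹

open Finset
-- Not `open Real`: its notation `π` would capture the variable `π` of the theorem.
open Real (log log_inv log_mul log_div log_lt_sub_one_of_pos)

lemma EReal.coe_finset_sum {ι : Type*} (s : Finset ι) (f : ι → ℝ) :
    ((∑ i ∈ s, f i : ℝ) : EReal) = ∑ i ∈ s, (f i : EReal) :=
  map_sum (⟨⟨Real.toEReal, EReal.coe_zero⟩, EReal.coe_add⟩ : ℝ →+ EReal) f s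

section Gibbs

lemma mul_log_lt_mul_log_add_sub {p q : ℝ} (hp : 0 ≤ p) (hq : 0 < q) (hpq : p ≠ q) :
    p * log q < p * log p + q - p := by
  rcases hp.eq_or_lt with rfl | hp
  · simpa using hq
  have hlog : log (q / p) < q / p - 1 :=
    log_lt_sub_one_of_pos (by positivity) (by rwa [ne_eq, div_eq_one_iff_eq hp.ne', eq_comm])
  rw [log_div hq.ne' hp.ne'] at hlog
  have := mul_lt_mul_of_pos_left hlog hp
  rw [mul_sub, mul_sub, mul_div_cancel₀ _ hp.ne', mul_one] at this
  linarith

lemma mul_log_le_mul_log_add_sub {p q : ℝ} (hp : 0 ≤ p) (hq : 0 ≤ q) (hqp : q = 0 → p = 0) :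
    p * log q ≤ p * log p + q - p := by
  rcases eq_or_ne p q with rfl | hpq
  · linarith
  rcases hq.eq_or_lt with rfl | hq
  · simp [hqp rfl]
  · exact (mul_log_lt_mul_log_add_sub hp hq hpq).le

variable {ι : Type*} [Fintype ι] {p q : ι → ℝ}

lemma entropy_le_sum_mul_log_inv (hp : ∀ i, 0 ≤ p i) (hq : ∀ i, 0 ≤ q i)
    (hsum : ∑ i, q i ≤ ∑ i, p i) (hqp : ∀ i, q i = 0 → p i = 0) :
    entropy p ≤ ∑ i, p i * log (q i)⁻¹ := by
  have key : ∑ i, p i * log (q i) ≤ ∑ i, (p i * log (p i) + q i - p i) :=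
    sum_le_sum fun i _ => mul_log_le_mul_log_add_sub (hp i) (hq i) (hqp i)
  simp only [entropy, log_inv, mul_neg, sum_neg_distrib, sum_sub_distrib, sum_add_distrib] at key ⊢
  linarith

lemma entropy_lt_sum_mul_log_inv (hp : ∀ i, 0 ≤ p i) (hq : ∀ i, 0 ≤ q i)
    (hsum : ∑ i, q i ≤ ∑ i, p i) (hqp : ∀ i, q i = 0 → p i = 0) (hne : p ≠ q) :
    entropy p < ∑ i, p i * log (q i)⁻¹ := by
  obtain ⟨i₀, hi₀⟩ := Function.ne_iff.1 hne
  have hq₀ : 0 < q i₀ := (hq i₀).lt_of_ne' fun h => hi₀ (by rw [h, hqp i₀ h])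
  have key : ∑ i, p i * log (q i) < ∑ i, (p i * log (p i) + q i - p i) :=
    sum_lt_sum (fun i _ => mul_log_le_mul_log_add_sub (hp i) (hq i) (hqp i))
      ⟨i₀, mem_univ _, mul_log_lt_mul_log_add_sub (hp i₀) hq₀ hi₀⟩
  simp only [entropy, log_inv, mul_neg, sum_neg_distrib, sum_sub_distrib, sum_add_distrib] at key ⊢
  linarith

end Gibbs

section CrossEntropy

variable {ι : Type*} [Fintype ι] {Q W : ι → ℝ}

lemma sum_coe_mul_negLogE_of_support (hQW : ∀ i, W i = 0 → Q i = 0) :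
    ∑ i, (Q i : EReal) * negLogE (W i) = ((∑ i, Q i * log (W i)⁻¹ : ℝ) : EReal) := by
  rw [EReal.coe_finset_sum]
  refine sum_congr rfl fun i _ => ?_
  by_cases hW : W i = 0
  · simp [negLogE, hW, hQW i hW]
  · rw [negLogE, if_neg hW, EReal.coe_mul]

lemma sum_coe_mul_negLogE_eq_top (hQ : ∀ i, 0 ≤ Q i) {i₀ : ι} (hQi₀ : Q i₀ ≠ 0)
    (hWi₀ : W i₀ = 0) : ∑ i, (Q i : EReal) * negLogE (W i) = ⊤ := by
  have hterm : ∀ i, (Q i : EReal) * negLogE (W i) ≠ ⊥ := by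
    intro i
    rcases (hQ i).eq_or_lt with hQi | hQi
    · simp [← hQi]
    · unfold negLogE
      split_ifs
      · simp [EReal.coe_mul_top_of_pos hQi]
      · exact EReal.coe_mul _ _ ▸ EReal.coe_ne_bot _
  classical
  rw [← add_sum_erase _ _ (mem_univ i₀), negLogE, if_pos hWi₀,
    EReal.coe_mul_top_of_pos ((hQ i₀).lt_of_ne' hQi₀), EReal.top_add_of_ne_bot]
  exact sum_induction _ (· ≠ ⊥) (fun _ _ ha hb => EReal.add_ne_bot_iff.2 ⟨ha, hb⟩)
    EReal.zero_ne_bot fun i _ => hterm i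

lemma coe_entropy_le_sum_coe_mul_negLogE (hQ : ∀ i, 0 ≤ Q i) (hW : ∀ i, 0 ≤ W i)
    (hsum : ∑ i, W i ≤ ∑ i, Q i) :
    (entropy Q : EReal) ≤ ∑ i, (Q i : EReal) * negLogE (W i) := by
  by_cases hQW : ∀ i, W i = 0 → Q i = 0
  · rw [sum_coe_mul_negLogE_of_support hQW, EReal.coe_le_coe_iff]
    exact entropy_le_sum_mul_log_inv hQ hW hsum hQW
  · push Not at hQW
    obtain ⟨i₀, hWi₀, hQi₀⟩ := hQW
    rw [sum_coe_mul_negLogE_eq_top hQ hQi₀ hWi₀]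
    exact le_top

end CrossEntropy

namespace IsCoupling

variable {X Y : Type*} [Fintype X] [Fintype Y] {PX : X → ℝ} {PY : Y → ℝ} {Q : X × Y → ℝ}

lemma le_left (h : IsCoupling PX PY Q) (p : X × Y) : Q p ≤ PX p.1 :=
  h.2.1 p.1 ▸ single_le_sum (fun y _ => h.1 (p.1, y)) (mem_univ p.2)

lemma le_right (h : IsCoupling PX PY Q) (p : X × Y) : Q p ≤ PY p.2 :=
  h.2.2 p.2 ▸ single_le_sum (fun x _ => h.1 (x, p.2)) (mem_univ p.1)

lemma eq_zero_of_mul_eq_zero (h : IsCoupling PX PY Q) {p : X × Y} (hp : PX p.1 * PY p.2 = 0) :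
    Q p = 0 := by
  rcases mul_eq_zero.1 hp with hp | hp
  · exact le_antisymm (hp ▸ h.le_left p) (h.1 p)
  · exact le_antisymm (hp ▸ h.le_right p) (h.1 p)

lemma nonneg_left (h : IsCoupling PX PY Q) (x : X) : 0 ≤ PX x :=
  h.2.1 x ▸ sum_nonneg fun y _ => h.1 (x, y)

lemma nonneg_right (h : IsCoupling PX PY Q) (y : Y) : 0 ≤ PY y :=
  h.2.2 y ▸ sum_nonneg fun x _ => h.1 (x, y)

lemma sum_left (h : IsCoupling PX PY Q) : ∑ x, PX x = ∑ p, Q p := by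
  simp only [← h.2.1, Fintype.sum_prod_type]

lemma sum_right (h : IsCoupling PX PY Q) : ∑ y, PY y = ∑ p, Q p := by
  simp only [← h.2.2, Fintype.sum_prod_type_right]

lemma sum_mul_left (h : IsCoupling PX PY Q) (f : X → ℝ) :
    ∑ p, Q p * f p.1 = ∑ x, PX x * f x := by
  simp only [Fintype.sum_prod_type, ← sum_mul, h.2.1]

lemma sum_mul_right (h : IsCoupling PX PY Q) (g : Y → ℝ) :
    ∑ p, Q p * g p.2 = ∑ y, PY y * g y := by
  simp only [Fintype.sum_prod_type_right, ← sum_mul, h.2.2]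

lemma sum_mul_log_inv_mul (h : IsCoupling PX PY Q) :
    ∑ p, Q p * log (PX p.1 * PY p.2)⁻¹ = entropy PX + entropy PY := by
  have hsplit : ∀ p : X × Y, Q p * log (PX p.1 * PY p.2)⁻¹
      = Q p * log (PX p.1)⁻¹ + Q p * log (PY p.2)⁻¹ := by
    intro p
    by_cases hp : PX p.1 * PY p.2 = 0
    · simp [h.eq_zero_of_mul_eq_zero hp]
    · rw [mul_inv, log_mul (inv_ne_zero (left_ne_zero_of_mul hp))
        (inv_ne_zero (right_ne_zero_of_mul hp)), mul_add]
  rw [sum_congr rfl fun p _ => hsplit p, sum_add_distrib, h.sum_mul_left fun x => log (PX x)⁻¹,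
    h.sum_mul_right fun y => log (PY y)⁻¹]
  rfl

end IsCoupling

section MaxCrossEnt

variable {X Y : Type*} [Fintype X] [Fintype Y] {PX : X → ℝ} {PY : Y → ℝ}

lemma isCoupling_mul (hX : ∀ x, 0 ≤ PX x) (hY : ∀ y, 0 ≤ PY y) (hX1 : ∑ x, PX x = 1)
    (hY1 : ∑ y, PY y = 1) :
    IsCoupling PX PY fun p => PX p.1 * PY p.2 :=
  ⟨fun p => mul_nonneg (hX p.1) (hY p.2), fun x => by simp only [← mul_sum, hY1, mul_one],
    fun y => by simp only [← sum_mul, hX1, one_mul]⟩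

lemma entropy_mul (hX : ∀ x, 0 ≤ PX x) (hY : ∀ y, 0 ≤ PY y) (hX1 : ∑ x, PX x = 1)
    (hY1 : ∑ y, PY y = 1) :
    entropy (fun p : X × Y => PX p.1 * PY p.2) = entropy PX + entropy PY :=
  (isCoupling_mul hX hY hX1 hY1).sum_mul_log_inv_mul

lemma IsCoupling.entropy_lt_add_of_ne {Q : X × Y → ℝ} (h : IsCoupling PX PY Q)
    (hQ1 : ∑ p, Q p = 1) (hne : Q ≠ fun p => PX p.1 * PY p.2) :
    entropy Q < entropy PX + entropy PY := by
  have hP := isCoupling_mul h.nonneg_left h.nonneg_right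
    (h.sum_left.trans hQ1) (h.sum_right.trans hQ1)
  rw [← h.sum_mul_log_inv_mul]
  exact entropy_lt_sum_mul_log_inv h.1 hP.1 (hP.sum_left.symm.trans h.sum_left).le
    (fun p => h.eq_zero_of_mul_eq_zero) hne

lemma IsCoupling.coe_entropy_le_maxCrossEnt {Q : X × Y → ℝ} (hQ : IsCoupling PX PY Q) :
    (entropy Q : EReal) ≤ maxCrossEnt PX PY Q :=
  le_sSup ⟨Q, hQ, (sum_coe_mul_negLogE_of_support fun _ => id).symm⟩

lemma coe_entropy_add_entropy_le_maxCrossEnt (hX : ∀ x, 0 ≤ PX x) (hY : ∀ y, 0 ≤ PY y)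
    (hX1 : ∑ x, PX x = 1) (hY1 : ∑ y, PY y = 1) {W : X × Y → ℝ} (hW : ∀ p, 0 ≤ W p)
    (hW1 : ∑ p, W p ≤ 1) :
    ((entropy PX + entropy PY : ℝ) : EReal) ≤ maxCrossEnt PX PY W := by
  have hP := isCoupling_mul hX hY hX1 hY1
  rw [← entropy_mul hX hY hX1 hY1]
  refine (coe_entropy_le_sum_coe_mul_negLogE hP.1 hW ?_).trans (le_sSup ⟨_, hP, rfl⟩)
  rwa [← hP.sum_left, hX1]

lemma maxCrossEnt_mul (hX : ∀ x, 0 ≤ PX x) (hY : ∀ y, 0 ≤ PY y) (hX1 : ∑ x, PX x = 1)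
    (hY1 : ∑ y, PY y = 1) :
    maxCrossEnt PX PY (fun p => PX p.1 * PY p.2) = ((entropy PX + entropy PY : ℝ) : EReal) := by
  have hP := isCoupling_mul hX hY hX1 hY1
  refine le_antisymm (sSup_le ?_) (coe_entropy_add_entropy_le_maxCrossEnt hX hY hX1 hY1 hP.1 ?_)
  · rintro _ ⟨Q, hQ, rfl⟩
    rw [sum_coe_mul_negLogE_of_support fun p => hQ.eq_zero_of_mul_eq_zero, hQ.sum_mul_log_inv_mul]
  · rw [← hP.sum_left, hX1]

end MaxCrossEnt

/-- `𝓗(π_X, π_Y ‖ π) ≥ H(π)`, with equality iff `π` is the product of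
its marginals. -/
theorem stmt_0 {X Y : Type*} [Fintype X] [Fintype Y]
    (π : X × Y → ℝ) (hπ0 : ∀ p, 0 ≤ π p) (hπ1 : ∑ p, π p = 1) :
    ((entropy π : ℝ) : EReal) ≤
      maxCrossEnt (fun x => ∑ y, π (x, y)) (fun y => ∑ x, π (x, y)) π ∧
    (maxCrossEnt (fun x => ∑ y, π (x, y)) (fun y => ∑ x, π (x, y)) π
        = ((entropy π : ℝ) : EReal) ↔
      ∀ p : X × Y, π p = (∑ y, π (p.1, y)) * (∑ x, π (x, p.2))) := by
  have hπ : IsCoupling (fun x => ∑ y, π (x, y)) (fun y => ∑ x, π (x, y)) π :=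
    ⟨hπ0, fun _ => rfl, fun _ => rfl⟩
  have hX1 : ∑ x, ∑ y, π (x, y) = 1 := hπ.sum_left.trans hπ1
  have hY1 : ∑ y, ∑ x, π (x, y) = 1 := hπ.sum_right.trans hπ1
  refine ⟨hπ.coe_entropy_le_maxCrossEnt, fun heq => ?_, fun hprod => ?_⟩
  · by_contra hne
    have hle := coe_entropy_add_entropy_le_maxCrossEnt hπ.nonneg_left hπ.nonneg_right hX1 hY1
      hπ0 hπ1.le
    rw [heq, EReal.coe_le_coe_iff] at hle
    exact (hπ.entropy_lt_add_of_ne hπ1 fun h => hne (congrFun h)).not_ge hle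
  · have hmax := maxCrossEnt_mul hπ.nonneg_left hπ.nonneg_right hX1 hY1
    rw [← entropy_mul hπ.nonneg_left hπ.nonneg_right hX1 hY1] at hmax
    rwa [← funext hprod] at hmax
end

section
/- Let μ₁, μ₂ ∈ ℝ and α, β > 0, and let P be the Gaussian measure on ℝ with mean μ₁ and variance α and Q the Gaussian measure on ℝ with mean μ₂ and variance β. Then the infimum over all probability measures R on ℝ × ℝ whose first marginal is P and whose second marginal is Q of ∫ (x − μ₁)(y − μ₂) dR(x,y) equals −√(αβ), and this infimum is attained by some such coupling. -/
/-!
The lower bound is the Cauchy–Schwarz inequality for covariances: under any coupling `R`, the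
centred integrand integrates to `cov[fst, snd; R]`, whose square is at most the product of the
variances `α β` of the marginals. It is attained by the antithetic coupling, the law of
`(μ₁ + √α Z, μ₂ - √β Z)` for a standard Gaussian `Z`.
-/

open MeasureTheory ProbabilityTheory

namespace ProbabilityTheory

section CauchySchwarz

variable {Ω : Type*} {mΩ : MeasurableSpace Ω} {P : Measure Ω} {X Y : Ω → ℝ}

lemma sq_covariance_le_variance_mul_variance [IsFiniteMeasure P] (hX : MemLp X 2 P)
    (hY : MemLp Y 2 P) : cov[X, Y; P] ^ 2 ≤ Var[X; P] * Var[Y; P] := by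
  have hquad : ∀ t : ℝ, 0 ≤ Var[X; P] * (t * t) + 2 * cov[X, Y; P] * t + Var[Y; P] := by
    intro t
    have h := variance_nonneg (t • X + Y) P
    rw [variance_add (hX.const_smul t) hY, variance_smul, covariance_smul_left] at h
    linarith
  have := discrim_le_zero hquad
  rw [discrim] at this
  linarith

lemma neg_sqrt_variance_mul_variance_le_covariance [IsFiniteMeasure P] (hX : MemLp X 2 P)
    (hY : MemLp Y 2 P) : -√(Var[X; P] * Var[Y; P]) ≤ cov[X, Y; P] :=
  neg_le_of_abs_le (Real.abs_le_sqrt (sq_covariance_le_variance_mul_variance hX hY))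

end CauchySchwarz

section Gaussian

lemma integral_sub_sq_gaussianReal (m : ℝ) (v : NNReal) :
    ∫ x, (x - m) ^ 2 ∂gaussianReal m v = v := by
  rw [← variance_fun_id_gaussianReal (μ := m), variance_eq_integral measurable_id'.aemeasurable,
    integral_id_gaussianReal]

lemma gaussianReal_map_const_add_const_mul (m s : ℝ) {v : NNReal} (hs : s ^ 2 = v) :
    (gaussianReal 0 1).map (fun z ↦ m + s * z) = gaussianReal m v := by
  have : (fun z ↦ m + s * z) = (m + ·) ∘ (s * ·) := rfl
  rw [this, ← Measure.map_map (by fun_prop) (by fun_prop), gaussianReal_map_const_mul,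
    gaussianReal_map_const_add]
  congr 1
  · simp
  · ext
    simp [hs]

variable {Ω : Type*} {mΩ : MeasurableSpace Ω} {P : Measure Ω} {X : Ω → ℝ} {m : ℝ} {v : NNReal}

lemma HasLaw.memLp_of_gaussianReal (hX : HasLaw X (gaussianReal m v) P) (p : NNReal) :
    MemLp X p P := by
  have h := memLp_id_gaussianReal (μ := m) (v := v) p
  rw [← hX.map_eq] at h
  exact (memLp_map_measure_iff aestronglyMeasurable_id hX.aemeasurable).1 h

lemma HasLaw.variance_eq_of_gaussianReal (hX : HasLaw X (gaussianReal m v) P) :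
    Var[X; P] = v := by
  rw [hX.variance_eq, variance_id_gaussianReal]

lemma HasLaw.integral_eq_of_gaussianReal (hX : HasLaw X (gaussianReal m v) P) : P[X] = m := by
  rw [hX.integral_eq, integral_id_gaussianReal]

end Gaussian

lemma neg_sqrt_le_integral_mul_of_hasLaw_gaussianReal {Ω : Type*} {mΩ : MeasurableSpace Ω}
    {P : Measure Ω} [IsFiniteMeasure P] {X Y : Ω → ℝ} {m₁ m₂ : ℝ} {v₁ v₂ : NNReal}
    (hX : HasLaw X (gaussianReal m₁ v₁) P) (hY : HasLaw Y (gaussianReal m₂ v₂) P) :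
    -√((v₁ : ℝ) * v₂) ≤ ∫ ω, (X ω - m₁) * (Y ω - m₂) ∂P := by
  have hcov : ∫ ω, (X ω - m₁) * (Y ω - m₂) ∂P = cov[X, Y; P] := by
    rw [covariance, hX.integral_eq_of_gaussianReal, hY.integral_eq_of_gaussianReal]
  rw [hcov, ← hX.variance_eq_of_gaussianReal, ← hY.variance_eq_of_gaussianReal]
  exact neg_sqrt_variance_mul_variance_le_covariance (hX.memLp_of_gaussianReal 2)
    (hY.memLp_of_gaussianReal 2)

end ProbabilityTheory

theorem stmt_6_general (μ₁ μ₂ : ℝ) (α β : NNReal) :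
    IsLeast
      {v : ℝ | ∃ R : Measure (ℝ × ℝ), IsProbabilityMeasure R ∧
        R.map Prod.fst = gaussianReal μ₁ α ∧
        R.map Prod.snd = gaussianReal μ₂ β ∧
        v = ∫ q : ℝ × ℝ, (q.1 - μ₁) * (q.2 - μ₂) ∂ R}
      (-Real.sqrt ((α : ℝ) * (β : ℝ))) := by
  constructor
  · have hpair : Measurable fun z : ℝ ↦ (μ₁ + √α * z, μ₂ + -√β * z) := by fun_prop
    refine ⟨(gaussianReal 0 1).map fun z ↦ (μ₁ + √α * z, μ₂ + -√β * z),
      Measure.isProbabilityMeasure_map hpair.aemeasurable, ?_, ?_, ?_⟩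
    · rw [Measure.map_map measurable_fst hpair]
      exact gaussianReal_map_const_add_const_mul μ₁ _ (Real.sq_sqrt α.coe_nonneg)
    · rw [Measure.map_map measurable_snd hpair]
      exact gaussianReal_map_const_add_const_mul μ₂ _ (by simp)
    · rw [integral_map hpair.aemeasurable (by fun_prop)]
      have hpt : ∀ z : ℝ, (μ₁ + √α * z - μ₁) * (μ₂ + -√β * z - μ₂) = -(√α * √β) * (z - 0) ^ 2 :=
        fun z ↦ by ring
      simp only [hpt, integral_const_mul, integral_sub_sq_gaussianReal, NNReal.coe_one, mul_one,
        Real.sqrt_mul α.coe_nonneg]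
  · rintro _ ⟨R, _, hfst, hsnd, rfl⟩
    exact neg_sqrt_le_integral_mul_of_hasLaw_gaussianReal ⟨by fun_prop, hfst⟩ ⟨by fun_prop, hsnd⟩

/-- the minimum over couplings of two Gaussians of
`∫ (x − μ₁)(y − μ₂) dR` equals `−√(αβ)`, and it is attained. -/
theorem stmt_6 (μ₁ μ₂ : ℝ) (α β : NNReal) (hα : 0 < α) (hβ : 0 < β) :
    IsLeast
      {v : ℝ | ∃ R : Measure (ℝ × ℝ), IsProbabilityMeasure R ∧
        R.map Prod.fst = gaussianReal μ₁ α ∧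
        R.map Prod.snd = gaussianReal μ₂ β ∧
        v = ∫ q : ℝ × ℝ, (q.1 - μ₁) * (q.2 - μ₂) ∂ R}
      (-Real.sqrt ((α : ℝ) * (β : ℝ))) :=
  stmt_6_general μ₁ μ₂ α β
end

section
/- Let 𝒲, 𝒳, 𝒴 be finite sets, let P_W be a pmf on 𝒲, and for each w ∈ 𝒲 let P_{X|W=w} be a pmf on 𝒳 and P_{Y|W=w} a pmf on 𝒴. Define the pmf π on 𝒳 × 𝒴 by π(x,y) := Σ_w P_W(w)·P_{X|W=w}(x)·P_{Y|W=w}(y). Then Σ_w P_W(w)·𝓗(P_{X|W=w}, P_{Y|W=w} ‖ π) ≥ H(π), where the sum on the left is taken in the extended reals. -/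
/-!
The maximum defining each `𝓗(P_{X|W=w}, P_{Y|W=w} ‖ π)` is at least the cross-entropy of the
product coupling `P_{X|W=w} ⊗ P_{Y|W=w}`. Cross-entropy is linear in its first argument, and
averaging these product couplings over `P_W` gives back `π` itself, whose cross-entropy against
`π` is `H(π)`. Linearity survives in the extended reals because the weights are finite and
nonnegative.
-/

open scoped BigOperators

open Finset

namespace EReal

lemma mul_sum_of_nonneg_of_ne_top {ι : Type*} {x : EReal} (hx : 0 ≤ x) (hx' : x ≠ ⊤)
    (s : Finset ι) (g : ι → EReal) : x * ∑ i ∈ s, g i = ∑ i ∈ s, x * g i :=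
  map_sum (⟨⟨(x * ·), mul_zero x⟩, left_distrib_of_nonneg_of_ne_top hx hx'⟩ : EReal →+ EReal) g s

lemma coe_finset_sum_s8 {ι : Type*} (s : Finset ι) (f : ι → ℝ) :
    ((∑ i ∈ s, f i : ℝ) : EReal) = ∑ i ∈ s, (f i : EReal) :=
  map_sum (⟨⟨(↑), coe_zero⟩, coe_add⟩ : ℝ →+ EReal) f s

lemma coe_sum_mul_of_nonneg {ι : Type*} {s : Finset ι} {f : ι → ℝ} (hf : ∀ i ∈ s, 0 ≤ f i)
    (y : EReal) : ((∑ i ∈ s, f i : ℝ) : EReal) * y = ∑ i ∈ s, (f i : EReal) * y := by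
  induction s using Finset.cons_induction with
  | empty => simp
  | cons a s ha ih =>
    rw [sum_cons, sum_cons, coe_add, right_distrib_of_nonneg (by exact_mod_cast hf a (by simp))
      (by exact_mod_cast sum_nonneg fun i hi => hf i (by simp [hi])),
      ih fun i hi => hf i (by simp [hi])]

end EReal

noncomputable def crossEnt {α : Type*} [Fintype α] (Q π : α → ℝ) : EReal :=
  ∑ a, (Q a : EReal) * negLogE (π a)

lemma crossEnt_self {α : Type*} [Fintype α] (π : α → ℝ) : crossEnt π π = entropy π := by
  rw [crossEnt, entropy, EReal.coe_finset_sum_s8]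
  refine sum_congr rfl fun a _ => ?_
  by_cases h : π a = 0 <;> simp [negLogE, h]

lemma crossEnt_sum_mul {ι α : Type*} [Fintype ι] [Fintype α] {c : ι → ℝ} (hc : ∀ i, 0 ≤ c i)
    {Q : ι → α → ℝ} (hQ : ∀ i a, 0 ≤ Q i a) (π : α → ℝ) :
    crossEnt (fun a => ∑ i, c i * Q i a) π = ∑ i, (c i : EReal) * crossEnt (Q i) π := by
  simp only [crossEnt,
    EReal.coe_sum_mul_of_nonneg fun i _ => mul_nonneg (hc i) (hQ i _),
    EReal.mul_sum_of_nonneg_of_ne_top (EReal.coe_nonneg.2 (hc _)) (EReal.coe_ne_top _),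
    EReal.coe_mul, mul_assoc]
  exact sum_comm

lemma crossEnt_le_maxCrossEnt {X Y : Type*} [Fintype X] [Fintype Y]
    {PX : X → ℝ} {PY : Y → ℝ} {Q : X × Y → ℝ} (hQ : IsCoupling PX PY Q) (π : X × Y → ℝ) :
    crossEnt Q π ≤ maxCrossEnt PX PY π :=
  le_sSup ⟨Q, hQ, rfl⟩

lemma isCoupling_mul_s8 {X Y : Type*} [Fintype X] [Fintype Y] {PX : X → ℝ} {PY : Y → ℝ}
    (hPX0 : ∀ x, 0 ≤ PX x) (hPX1 : ∑ x, PX x = 1) (hPY0 : ∀ y, 0 ≤ PY y)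
    (hPY1 : ∑ y, PY y = 1) :
    IsCoupling PX PY (fun p => PX p.1 * PY p.2) :=
  ⟨fun p => mul_nonneg (hPX0 p.1) (hPY0 p.2),
    fun x => by dsimp only; rw [← mul_sum, hPY1, mul_one],
    fun y => by dsimp only; rw [← sum_mul, hPX1, one_mul]⟩

theorem stmt_8_general {W X Y : Type*} [Fintype W] [Fintype X] [Fintype Y]
    (PW : W → ℝ) (hPW0 : ∀ w, 0 ≤ PW w)
    (PX : W → X → ℝ) (hPX0 : ∀ w x, 0 ≤ PX w x) (hPX1 : ∀ w, ∑ x, PX w x = 1)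
    (PY : W → Y → ℝ) (hPY0 : ∀ w y, 0 ≤ PY w y) (hPY1 : ∀ w, ∑ y, PY w y = 1) :
    ((entropy (fun p : X × Y => ∑ w, PW w * PX w p.1 * PY w p.2) : ℝ) : EReal)
      ≤ ∑ w, (PW w : EReal) *
          maxCrossEnt (PX w) (PY w)
            (fun p : X × Y => ∑ w', PW w' * PX w' p.1 * PY w' p.2) := by
  set π : X × Y → ℝ := fun p => ∑ w, PW w * PX w p.1 * PY w p.2
  calc (entropy π : EReal)
      = crossEnt π π := (crossEnt_self π).symm
    _ = crossEnt (fun p => ∑ w, PW w * (PX w p.1 * PY w p.2)) π := by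
      simp only [π, mul_assoc]
    _ = ∑ w, (PW w : EReal) * crossEnt (fun p => PX w p.1 * PY w p.2) π :=
      crossEnt_sum_mul (Q := fun w (p : X × Y) => PX w p.1 * PY w p.2) hPW0
        (fun w p => mul_nonneg (hPX0 w p.1) (hPY0 w p.2)) π
    _ ≤ ∑ w, (PW w : EReal) * maxCrossEnt (PX w) (PY w) π :=
      sum_le_sum fun w _ => mul_le_mul_of_nonneg_left
        (crossEnt_le_maxCrossEnt (isCoupling_mul_s8 (hPX0 w) (hPX1 w) (hPY0 w) (hPY1 w)) π)
        (EReal.coe_nonneg.2 (hPW0 w))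

/-- for a mixture `π(x,y) = ∑_w P_W(w) P_{X|W=w}(x) P_{Y|W=w}(y)`,
`∑_w P_W(w) 𝓗(P_{X|W=w}, P_{Y|W=w} ‖ π) ≥ H(π)` (the left sum taken in the
extended reals). -/
theorem stmt_8 {W X Y : Type*} [Fintype W] [Fintype X] [Fintype Y]
    (PW : W → ℝ) (hPW0 : ∀ w, 0 ≤ PW w) (hPW1 : ∑ w, PW w = 1)
    (PX : W → X → ℝ) (hPX0 : ∀ w x, 0 ≤ PX w x) (hPX1 : ∀ w, ∑ x, PX w x = 1)
    (PY : W → Y → ℝ) (hPY0 : ∀ w y, 0 ≤ PY w y) (hPY1 : ∀ w, ∑ y, PY w y = 1) :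
    ((entropy (fun p : X × Y => ∑ w, PW w * PX w p.1 * PY w p.2) : ℝ) : EReal)
      ≤ ∑ w, (PW w : EReal) *
          maxCrossEnt (PX w) (PY w)
            (fun p : X × Y => ∑ w', PW w' * PX w' p.1 * PY w' p.2) :=
  stmt_8_general PW hPW0 PX hPX0 hPX1 PY hPY0 hPY1
end

section
/- Let (Ω, 𝔽, μ) be a probability space, let p ∈ [0, 1/2], and let α, β : Ω → [0,1] be measurable functions with E[α] = 1/2, E[β] = 1/2, and E[α·β] = (1−p)/2. Define a := 1/2 − √(E[(α − 1/2)²]) and b := 1/2 − √(E[(β − 1/2)²]). Then a ∈ [0, 1/2], b ∈ [0, 1/2], and a(1−b) + (1−a)b ≤ p. -/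
/-!
Write `s² = Var α`, `t² = Var β`; both are at most `1/4` by Popoviciu's inequality, so
`a = 1/2 - s` and `b = 1/2 - t` lie in `[0, 1/2]`. The means being `1/2`,
`cov(α, β) = E[αβ] - 1/4 = (1 - 2p)/4`, and `a(1-b) + (1-a)b = 1/2 - 2st`, so the inequality
is exactly the Cauchy–Schwarz bound `cov(α, β) ≤ s t`.
-/

open MeasureTheory ProbabilityTheory

section

variable {Ω : Type*} [MeasurableSpace Ω] {μ : Measure Ω}

theorem integral_mul_le_sqrt_integral_sq_mul_sqrt {f g : Ω → ℝ}
    (hf : MemLp f 2 μ) (hg : MemLp g 2 μ) :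
    ∫ ω, f ω * g ω ∂μ ≤ √(∫ ω, f ω ^ 2 ∂μ) * √(∫ ω, g ω ^ 2 ∂μ) := by
  have hconj : Real.HolderConjugate 2 2 := .two_two
  have holder := integral_mul_norm_le_Lp_mul_Lq hconj
    (by rwa [ENNReal.ofReal_ofNat]) (by rwa [ENNReal.ofReal_ofNat]) (f := f) (g := g)
  simp only [Real.norm_eq_abs, Real.rpow_two, sq_abs] at holder
  calc ∫ ω, f ω * g ω ∂μ ≤ |∫ ω, f ω * g ω ∂μ| := le_abs_self _
    _ ≤ ∫ ω, |f ω * g ω| ∂μ := abs_integral_le_integral_abs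
    _ = ∫ ω, |f ω| * |g ω| ∂μ := by simp only [abs_mul]
    _ ≤ _ := by rwa [Real.sqrt_eq_rpow, Real.sqrt_eq_rpow]

theorem covariance_le_sqrt_variance_mul_sqrt [IsFiniteMeasure μ] {X Y : Ω → ℝ}
    (hX : MemLp X 2 μ) (hY : MemLp Y 2 μ) :
    cov[X, Y; μ] ≤ √(Var[X; μ]) * √(Var[Y; μ]) := by
  rw [variance_eq_integral hX.aemeasurable, variance_eq_integral hY.aemeasurable]
  exact integral_mul_le_sqrt_integral_sq_mul_sqrt (hX.sub (memLp_const _)) (hY.sub (memLp_const _))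

theorem sqrt_variance_le_of_bounded [IsProbabilityMeasure μ] {a b : ℝ} (hab : a ≤ b)
    {X : Ω → ℝ} (h : ∀ᵐ ω ∂μ, X ω ∈ Set.Icc a b) (hX : AEMeasurable X μ) :
    √(Var[X; μ]) ≤ (b - a) / 2 := by
  rw [Real.sqrt_le_left (by linarith)]
  exact variance_le_sq_of_bounded h hX

end

theorem stmt_11_general {Ω : Type*} [MeasurableSpace Ω] (μ : Measure Ω) [IsProbabilityMeasure μ]
    (p : ℝ)
    (α β : Ω → ℝ) (hαm : Measurable α) (hβm : Measurable β)
    (hα01 : ∀ ω, α ω ∈ Set.Icc (0 : ℝ) 1) (hβ01 : ∀ ω, β ω ∈ Set.Icc (0 : ℝ) 1)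
    (hEα : ∫ ω, α ω ∂μ = 1 / 2) (hEβ : ∫ ω, β ω ∂μ = 1 / 2)
    (hEαβ : ∫ ω, α ω * β ω ∂μ = (1 - p) / 2) :
    (1 / 2 - Real.sqrt (∫ ω, (α ω - 1 / 2) ^ 2 ∂μ)) ∈ Set.Icc (0 : ℝ) (1 / 2) ∧
    (1 / 2 - Real.sqrt (∫ ω, (β ω - 1 / 2) ^ 2 ∂μ)) ∈ Set.Icc (0 : ℝ) (1 / 2) ∧
    (1 / 2 - Real.sqrt (∫ ω, (α ω - 1 / 2) ^ 2 ∂μ)) *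
        (1 - (1 / 2 - Real.sqrt (∫ ω, (β ω - 1 / 2) ^ 2 ∂μ))) +
      (1 - (1 / 2 - Real.sqrt (∫ ω, (α ω - 1 / 2) ^ 2 ∂μ))) *
        (1 / 2 - Real.sqrt (∫ ω, (β ω - 1 / 2) ^ 2 ∂μ)) ≤ p := by
  have hα : MemLp α 2 μ := memLp_of_bounded (.of_forall hα01) hαm.aestronglyMeasurable 2
  have hβ : MemLp β 2 μ := memLp_of_bounded (.of_forall hβ01) hβm.aestronglyMeasurable 2
  have hVarα : Var[α; μ] = ∫ ω, (α ω - 1 / 2) ^ 2 ∂μ := by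
    rw [variance_eq_integral hαm.aemeasurable, hEα]
  have hVarβ : Var[β; μ] = ∫ ω, (β ω - 1 / 2) ^ 2 ∂μ := by
    rw [variance_eq_integral hβm.aemeasurable, hEβ]
  have hcov : cov[α, β; μ] = (1 - 2 * p) / 4 := by
    rw [covariance_eq_sub hα hβ, Pi.mul_def, hEαβ, hEα, hEβ]
    ring
  have hs := sqrt_variance_le_of_bounded zero_le_one (.of_forall hα01) hαm.aemeasurable (μ := μ)
  have ht := sqrt_variance_le_of_bounded zero_le_one (.of_forall hβ01) hβm.aemeasurable (μ := μ)
  have hcs := covariance_le_sqrt_variance_mul_sqrt hα hβ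
  rw [hcov] at hcs
  rw [← hVarα, ← hVarβ]
  have hs0 := Real.sqrt_nonneg (Var[α; μ])
  have ht0 := Real.sqrt_nonneg (Var[β; μ])
  exact ⟨⟨by linarith, by linarith⟩, ⟨by linarith, by linarith⟩, by linarith⟩

/-- converse step for the DSBS. If `E[α] = E[β] = 1/2` and
`E[αβ] = (1−p)/2` with `α, β` taking values in `[0,1]` and `p ∈ [0, 1/2]`, then
`a := 1/2 − √E[(α−1/2)²]` and `b := 1/2 − √E[(β−1/2)²]` lie in `[0, 1/2]` and
satisfy `a(1−b) + (1−a)b ≤ p`. -/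
theorem stmt_11 {Ω : Type*} [MeasurableSpace Ω] (μ : Measure Ω) [IsProbabilityMeasure μ]
    (p : ℝ) (hp : p ∈ Set.Icc (0 : ℝ) (1 / 2))
    (α β : Ω → ℝ) (hαm : Measurable α) (hβm : Measurable β)
    (hα01 : ∀ ω, α ω ∈ Set.Icc (0 : ℝ) 1) (hβ01 : ∀ ω, β ω ∈ Set.Icc (0 : ℝ) 1)
    (hEα : ∫ ω, α ω ∂μ = 1 / 2) (hEβ : ∫ ω, β ω ∂μ = 1 / 2)
    (hEαβ : ∫ ω, α ω * β ω ∂μ = (1 - p) / 2) :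
    (1 / 2 - Real.sqrt (∫ ω, (α ω - 1 / 2) ^ 2 ∂μ)) ∈ Set.Icc (0 : ℝ) (1 / 2) ∧
    (1 / 2 - Real.sqrt (∫ ω, (β ω - 1 / 2) ^ 2 ∂μ)) ∈ Set.Icc (0 : ℝ) (1 / 2) ∧
    (1 / 2 - Real.sqrt (∫ ω, (α ω - 1 / 2) ^ 2 ∂μ)) *
        (1 - (1 / 2 - Real.sqrt (∫ ω, (β ω - 1 / 2) ^ 2 ∂μ))) +
      (1 - (1 / 2 - Real.sqrt (∫ ω, (α ω - 1 / 2) ^ 2 ∂μ))) *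
        (1 / 2 - Real.sqrt (∫ ω, (β ω - 1 / 2) ^ 2 ∂μ)) ≤ p :=
  stmt_11_general μ p α β hαm hβm hα01 hβ01 hEα hEβ hEαβ
end
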